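/- arXiv:1103.4342 — 3 statements merged into one kernel-verified Lean document; each statement's English description precedes it below -/
import Mathlib

section
/- Let →P and ←P be n×n matrices with P = →P + ←P, where →P has nonnegative entries and powers tending to zero (so I − →P is invertible). Define P̃ = (I − →P)^{-1} ←P. If P is row-stochastic and ←P, →P are the column splitting of P with respect to a subset S_π, then P̃ is row-stochastic, and moreover every row of P̃ is supported on S_π: P̃(i,j) = 0 whenever j ∉ S_π, and ∑_{j ∈ S_π} P̃(i,j) = 1 for all i. -/
/-!
Since `Pr ^ k → 0`, the Neumann series `∑ Pr ^ k` converges to `(1 - Pr)⁻¹`, whose entries are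
therefore nonnegative, and so are those of `P̃ = (1 - Pr)⁻¹ * Pl`. Rows of `P̃` sum to one because
`Pl *ᵥ 1 = P *ᵥ 1 - Pr *ᵥ 1 = (1 - Pr) *ᵥ 1`. The support claim holds already for `Pl`.
-/

open Matrix Filter Finset Topology

theorem tendsto_geom_sum_ringInverse_of_tendsto_pow_zero {R : Type*} [Ring R] [TopologicalSpace R]
    [IsTopologicalRing R] {x : R} (hu : IsUnit (1 - x)) (hx : Tendsto (x ^ ·) atTop (𝓝 0)) :
    Tendsto (fun m => ∑ k ∈ range m, x ^ k) atTop (𝓝 (Ring.inverse (1 - x))) := by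
  have hgeom : ∀ m, ∑ k ∈ range m, x ^ k = Ring.inverse (1 - x) * (1 - x ^ m) := fun m => by
    rw [← mul_neg_geom_sum, ← mul_assoc, Ring.inverse_mul_cancel _ hu, one_mul]
  simpa [hgeom] using ((tendsto_const_nhds (x := 1)).sub hx).const_mul (Ring.inverse (1 - x))

namespace Matrix

variable {ι K : Type*} [Fintype ι] [DecidableEq ι]

theorem isUnit_det_one_sub_of_tendsto_pow_zero [Field K] [TopologicalSpace K]
    [IsTopologicalRing K] [T2Space K] {A : Matrix ι ι K} (hA : Tendsto (A ^ ·) atTop (𝓝 0)) :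
    IsUnit (1 - A).det := by
  rw [isUnit_iff_ne_zero]
  intro hdet
  obtain ⟨v, hv, hker⟩ := exists_mulVec_eq_zero_iff.mpr hdet
  have hfix : A *ᵥ v = v := by
    rwa [sub_mulVec, one_mulVec, sub_eq_zero, eq_comm] at hker
  have hpow : ∀ k : ℕ, (A ^ k) *ᵥ v = v := fun k => by
    induction k with
    | zero => exact one_mulVec v
    | succ k ih => rw [pow_succ', ← mulVec_mulVec, ih, hfix]
  have hlim : Tendsto (fun k : ℕ => (A ^ k) *ᵥ v) atTop (𝓝 ((0 : Matrix ι ι K) *ᵥ v)) :=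
    ((continuous_id.matrix_mulVec continuous_const).tendsto _).comp hA
  simp only [hpow, zero_mulVec] at hlim
  exact hv (tendsto_nhds_unique tendsto_const_nhds hlim)

theorem inv_one_sub_apply_nonneg [Field K] [LinearOrder K] [IsStrictOrderedRing K]
    [TopologicalSpace K] [OrderClosedTopology K] [IsTopologicalRing K] {A : Matrix ι ι K}
    (hA0 : ∀ i j, 0 ≤ A i j) (hA : Tendsto (A ^ ·) atTop (𝓝 0)) (i j : ι) :
    0 ≤ (1 - A)⁻¹ i j := by
  have hu : IsUnit (1 - A) :=
    (isUnit_iff_isUnit_det _).mpr (isUnit_det_one_sub_of_tendsto_pow_zero hA)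
  have hentry : Tendsto (fun m => (∑ k ∈ range m, A ^ k) i j) atTop
      (𝓝 (Ring.inverse (1 - A) i j)) :=
    ((continuous_id.matrix_elem i j).tendsto _).comp
      (tendsto_geom_sum_ringInverse_of_tendsto_pow_zero hu hA)
  rw [nonsing_inv_eq_ringInverse]
  refine ge_of_tendsto' hentry fun m => ?_
  rw [Matrix.sum_apply]
  exact sum_nonneg fun k _ => pow_apply_nonneg hA0 k i j

theorem inv_one_sub_mul_mulVec_eq_self [CommRing K] {A B : Matrix ι ι K} {v : ι → K}
    (hB : IsUnit (1 - B).det) (hv : (A + B) *ᵥ v = v) : ((1 - B)⁻¹ * A) *ᵥ v = v := by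
  have hA : A *ᵥ v = (1 - B) *ᵥ v := by
    rw [sub_mulVec, one_mulVec]
    exact eq_sub_of_add_eq (by rwa [← add_mulVec])
  rw [← mulVec_mulVec, hA, mulVec_mulVec, nonsing_inv_mul _ hB, one_mulVec]

theorem inv_one_sub_mul_mem_rowStochastic [Field K] [LinearOrder K] [IsStrictOrderedRing K]
    [TopologicalSpace K] [OrderClosedTopology K] [IsTopologicalRing K] {A B : Matrix ι ι K}
    (hA0 : ∀ i j, 0 ≤ A i j) (hB0 : ∀ i j, 0 ≤ B i j) (hB : Tendsto (B ^ ·) atTop (𝓝 0))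
    (hAB : A + B ∈ rowStochastic K ι) : (1 - B)⁻¹ * A ∈ rowStochastic K ι := by
  refine mem_rowStochastic.mpr ⟨fun i j => ?_, ?_⟩
  · exact sum_nonneg fun k _ => mul_nonneg (inv_one_sub_apply_nonneg hB0 hB i k) (hA0 k j)
  · exact inv_one_sub_mul_mulVec_eq_self (isUnit_det_one_sub_of_tendsto_pow_zero hB)
      (one_vecMul_of_mem_rowStochastic hAB)

end Matrix

theorem stmt_6 {n : ℕ} (Sπ : Finset (Fin n)) (P Pl Pr : Matrix (Fin n) (Fin n) ℝ)
    (hnonneg : ∀ i j, 0 ≤ P i j) (hrow : ∀ i, ∑ j, P i j = 1)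
    (hPl : ∀ i j, Pl i j = if j ∈ Sπ then P i j else 0)
    (hPr : ∀ i j, Pr i j = if j ∉ Sπ then P i j else 0)
    (hlim : Tendsto (fun k : ℕ => Pr ^ k) atTop (nhds 0))
    (Ptilde : Matrix (Fin n) (Fin n) ℝ)
    (hPt : Ptilde = (1 - Pr)⁻¹ * Pl) :
    (∀ i j, 0 ≤ Ptilde i j) ∧ (∀ i, ∑ j, Ptilde i j = 1) ∧
      (∀ i j, j ∉ Sπ → Ptilde i j = 0) ∧ (∀ i, ∑ j ∈ Sπ, Ptilde i j = 1) := by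
  have hsplit : Pl + Pr = P := by
    ext i j
    rw [Matrix.add_apply, hPl, hPr]
    split_ifs <;> simp
  have hPl0 : ∀ i j, 0 ≤ Pl i j := fun i j => by
    rw [hPl]; split_ifs <;> simp [hnonneg i j]
  have hPr0 : ∀ i j, 0 ≤ Pr i j := fun i j => by
    rw [hPr]; split_ifs <;> simp [hnonneg i j]
  have hstoch : Ptilde ∈ rowStochastic ℝ (Fin n) := hPt ▸
    inv_one_sub_mul_mem_rowStochastic hPl0 hPr0 hlim
      (hsplit ▸ mem_rowStochastic_iff_sum.mpr ⟨hnonneg, hrow⟩)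
  obtain ⟨hnn, hsum⟩ := mem_rowStochastic_iff_sum.mp hstoch
  have hsupp : ∀ i j, j ∉ Sπ → Ptilde i j = 0 := fun i j hj => by
    rw [hPt, mul_apply]
    exact sum_eq_zero fun k _ => by rw [hPl, if_neg hj, mul_zero]
  refine ⟨hnn, hsum, hsupp, fun i => ?_⟩
  rw [sum_subset (subset_univ Sπ) fun j _ hj => hsupp i j hj]
  exact hsum i
end

section
/- Let P = →P + ←P be n×n matrices where →P has nonnegative entries and powers tending to zero, let g, g̃, P̃ be as above with g̃ = (I − →P)^{-1}g and P̃ = (I − →P)^{-1}←P. Suppose λ ∈ ℝ and h ∈ ℝⁿ satisfy λ·𝟏 + h ≤ g + P·h + λ·(→P·𝟏) componentwise. Then λ·𝟏 + h ≤ g̃ + P̃·h componentwise. -/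
open Matrix Filter

theorem stmt_12 {n : ℕ} (P Pl Pr : Matrix (Fin n) (Fin n) ℝ)
    (hsplit : P = Pr + Pl)
    (hnonneg : ∀ i j, 0 ≤ Pr i j)
    (hlim : Tendsto (fun k : ℕ => Pr ^ k) atTop (nhds 0))
    (Ptilde : Matrix (Fin n) (Fin n) ℝ) (hPt : Ptilde = (1 - Pr)⁻¹ * Pl)
    (g gtilde : Fin n → ℝ) (hg : gtilde = (1 - Pr)⁻¹.mulVec g)
    (lam : ℝ) (h : Fin n → ℝ)
    (hineq : ∀ i, lam * 1 + h i ≤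
      g i + P.mulVec h i + lam * (Pr.mulVec (fun _ => (1 : ℝ)) i)) :
    ∀ i, lam * 1 + h i ≤ gtilde i + Ptilde.mulVec h i := by
  set A : Matrix (Fin n) (Fin n) ℝ := 1 - Pr with hA
  -- A is invertible
  have hunit : IsUnit A := by
    rw [← Matrix.mulVec_injective_iff_isUnit]
    intro x y hxy
    have hz : A.mulVec (x - y) = 0 := by
      rw [Matrix.mulVec_sub, hxy, sub_self]
    set z := x - y with hzdef
    have hfix : Pr.mulVec z = z := by
      have h0 : Matrix.mulVec 1 z - Pr.mulVec z = 0 := by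
        rw [← Matrix.sub_mulVec]; exact hz
      rw [Matrix.one_mulVec] at h0
      exact (sub_eq_zero.mp h0).symm
    have hpow : ∀ k : ℕ, (Pr ^ k).mulVec z = z := by
      intro k
      induction k with
      | zero => simp [Matrix.one_mulVec]
      | succ k ih => rw [pow_succ', ← Matrix.mulVec_mulVec, ih, hfix]
    have hcont : Continuous fun M : Matrix (Fin n) (Fin n) ℝ => M.mulVec z :=
      Continuous.matrix_mulVec continuous_id continuous_const
    have htend : Tendsto (fun k : ℕ => (Pr ^ k).mulVec z) atTop (nhds ((0 : Matrix (Fin n) (Fin n) ℝ).mulVec z)) :=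
      (hcont.tendsto 0).comp hlim
    simp only [hpow] at htend
    have hz0 : z = (0 : Matrix (Fin n) (Fin n) ℝ).mulVec z :=
      tendsto_nhds_unique tendsto_const_nhds htend
    rw [Matrix.zero_mulVec] at hz0
    exact sub_eq_zero.mp hz0
  have hdet : IsUnit A.det := (Matrix.isUnit_iff_isUnit_det A).mp hunit
  -- nonnegativity of powers of Pr
  have hpownn : ∀ k : ℕ, ∀ i j, 0 ≤ (Pr ^ k) i j := by
    intro k
    induction k with
    | zero => intro i j; by_cases hij : i = j <;> simp [pow_zero, Matrix.one_apply, hij]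
    | succ k ih =>
      intro i j
      rw [pow_succ, Matrix.mul_apply]
      exact Finset.sum_nonneg fun l _ => mul_nonneg (ih i l) (hnonneg l j)
  -- A⁻¹ has nonnegative entries
  have hinvnn : ∀ i j, 0 ≤ A⁻¹ i j := by
    intro i j
    -- partial sums S_k = A⁻¹ * (1 - Pr ^ k) are nonneg and tend to A⁻¹
    have hSk : ∀ k : ℕ, A⁻¹ * (1 - Pr ^ k) = ∑ m ∈ Finset.range k, Pr ^ m := by
      intro k
      have hgeom : A * (∑ m ∈ Finset.range k, Pr ^ m) = 1 - Pr ^ k := by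
        rw [hA]
        induction k with
        | zero => simp
        | succ k ih =>
          rw [Finset.sum_range_succ, mul_add, ih, sub_mul, one_mul, pow_succ']
          abel
      calc A⁻¹ * (1 - Pr ^ k) = A⁻¹ * (A * ∑ m ∈ Finset.range k, Pr ^ m) := by rw [hgeom]
        _ = (A⁻¹ * A) * ∑ m ∈ Finset.range k, Pr ^ m := by rw [mul_assoc]
        _ = ∑ m ∈ Finset.range k, Pr ^ m := by rw [Matrix.nonsing_inv_mul A hdet, one_mul]
    have hSnn : ∀ k : ℕ, 0 ≤ (A⁻¹ * (1 - Pr ^ k)) i j := by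
      intro k
      rw [hSk]
      simp only [Matrix.sum_apply]
      exact Finset.sum_nonneg fun m _ => hpownn m i j
    have hcont : Continuous fun M : Matrix (Fin n) (Fin n) ℝ => (A⁻¹ * (1 - M)) i j := by
      apply Continuous.matrix_elem
      exact Continuous.matrix_mul continuous_const (continuous_const.sub continuous_id)
    have htend : Tendsto (fun k : ℕ => (A⁻¹ * (1 - Pr ^ k)) i j) atTop
        (nhds ((A⁻¹ * (1 - 0)) i j)) := (hcont.tendsto 0).comp hlim
    have : 0 ≤ (A⁻¹ * (1 - 0)) i j := le_of_tendsto_of_tendsto' tendsto_const_nhds htend hSnn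
    simpa using this
  -- rearranged inequality: A.mulVec v ≤ g + Pl.mulVec h, where v = lam • 1 + h
  set v : Fin n → ℝ := fun i => lam * 1 + h i with hv
  have hre : ∀ i, A.mulVec v i ≤ g i + Pl.mulVec h i := by
    intro i
    have h1 : A.mulVec v i = v i - Pr.mulVec v i := by
      rw [hA, Matrix.sub_mulVec, Matrix.one_mulVec]; rfl
    have h2 : Pr.mulVec v i = lam * Pr.mulVec (fun _ => (1 : ℝ)) i + Pr.mulVec h i := by
      simp only [Matrix.mulVec, dotProduct, hv]
      rw [Finset.mul_sum, ← Finset.sum_add_distrib]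
      congr 1; ext j; ring
    have h3 : P.mulVec h i = Pr.mulVec h i + Pl.mulVec h i := by
      rw [hsplit, Matrix.add_mulVec]; rfl
    have := hineq i
    rw [h3] at this
    rw [h1, h2]
    simp only [hv]
    linarith
  -- multiply by A⁻¹, entrywise-nonneg matrices preserve ≤
  have hmono : ∀ (x y : Fin n → ℝ), (∀ i, x i ≤ y i) → ∀ i, A⁻¹.mulVec x i ≤ A⁻¹.mulVec y i := by
    intro x y hxy i
    simp only [Matrix.mulVec, dotProduct]
    apply Finset.sum_le_sum
    intro j _
    exact mul_le_mul_of_nonneg_left (hxy j) (hinvnn i j)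
  -- conclude
  intro i
  have key := hmono _ _ hre i
  have hleft : A⁻¹.mulVec (A.mulVec v) = v := by
    rw [Matrix.mulVec_mulVec, Matrix.nonsing_inv_mul A hdet, Matrix.one_mulVec]
  have hright : A⁻¹.mulVec (fun i => g i + Pl.mulVec h i) i = gtilde i + Ptilde.mulVec h i := by
    have : (fun i => g i + Pl.mulVec h i) = g + Pl.mulVec h := rfl
    rw [this, Matrix.mulVec_add, hg, hPt, ← Matrix.mulVec_mulVec]
    rfl
  rw [hleft] at key
  calc lam * 1 + h i = v i := rfl
    _ ≤ _ := key
    _ = gtilde i + Ptilde.mulVec h i := hright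
end

section
/- Let P = →P + ←P with I − →P invertible, P̃ = (I − →P)^{-1}←P, g ∈ ℝⁿ, g̃ = (I − →P)^{-1}g. Suppose (J, h) ∈ ℝⁿ × ℝⁿ satisfy the two equations J = P̃·J and J + h = g̃ + P̃·h. Then (J, h) satisfy J = P·J and J + h = g + P·h + →P·J; conversely, if (J, h) satisfy the latter two equations then they satisfy the former two. -/
open Matrix

/-
Both systems are related by multiplying through by `I - →P`: for invertible `I - R` one has
`v = (I - R)⁻¹ w ↔ v = w + R v`, and applying this to `w = ←P J` and to `w = g + ←P h` (with
`v = J + h`) turns the equations for `P̃, g̃` into those for `P = →P + ←P`.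
-/

section

variable {m α : Type*} [Fintype m] [DecidableEq m] [CommRing α]

theorem eq_nonsing_inv_mulVec_iff {A : Matrix m m α} (hA : IsUnit A) {x y : m → α} :
    x = A⁻¹ *ᵥ y ↔ A *ᵥ x = y := by
  have hdet : IsUnit A.det := (isUnit_iff_isUnit_det A).mp hA
  constructor
  · rintro rfl
    rw [mulVec_mulVec, mul_nonsing_inv A hdet, one_mulVec]
  · rintro rfl
    rw [mulVec_mulVec, nonsing_inv_mul A hdet, one_mulVec]

theorem eq_inv_one_sub_mulVec_iff {R : Matrix m m α} (hR : IsUnit (1 - R)) {v w : m → α} :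
    v = (1 - R)⁻¹ *ᵥ w ↔ v = w + R *ᵥ v := by
  rw [eq_nonsing_inv_mulVec_iff hR, sub_mulVec, one_mulVec, sub_eq_iff_eq_add, eq_comm]

end

theorem stmt_17 {n : ℕ} (P Pl Pr : Matrix (Fin n) (Fin n) ℝ)
    (hsplit : P = Pr + Pl) (hinv : IsUnit (1 - Pr))
    (Ptilde : Matrix (Fin n) (Fin n) ℝ) (hPt : Ptilde = (1 - Pr)⁻¹ * Pl)
    (g gtilde : Fin n → ℝ) (hg : gtilde = (1 - Pr)⁻¹.mulVec g)
    (J h : Fin n → ℝ) :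
    (J = Ptilde.mulVec J ∧ J + h = gtilde + Ptilde.mulVec h) ↔
      (J = P.mulVec J ∧ J + h = g + P.mulVec h + Pr.mulVec J) := by
  subst hsplit hPt hg
  rw [← mulVec_mulVec, ← mulVec_mulVec, ← mulVec_add, eq_inv_one_sub_mulVec_iff hinv,
    eq_inv_one_sub_mulVec_iff hinv, add_mulVec, add_mulVec, mulVec_add]
  have hfix : Pl *ᵥ J + Pr *ᵥ J = Pr *ᵥ J + Pl *ᵥ J := add_comm _ _
  have hbias : g + Pl *ᵥ h + (Pr *ᵥ J + Pr *ᵥ h) = g + (Pr *ᵥ h + Pl *ᵥ h) + Pr *ᵥ J := by abel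
  rw [hfix, hbias]
end
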